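/- arXiv:2201.03103 — 4 statements merged into one kernel-verified Lean document; each statement's English description precedes it below -/
import Mathlib

section
/- Let A ∈ ℝ^{n×n} be a matrix with a real eigenvalue λ₁ of strictly largest absolute value with right eigenvector v, and let R ∈ ℝ^{k×n} with ker R = span(v). For any p ∈ [1,∞], the R-weighted induced seminorm ⟦A⟧_{p,R} := sup { ‖RAx‖_p : ‖Rx‖_p ≤ 1, x ⊥ span(v) } satisfies ⟦A⟧_{p,R} ≥ ρ_ess(A), where ρ_ess(A) is the maximum modulus among eigenvalues of A other than λ₁. -/
/-!
Write `q x = ‖R x‖_p` and let `N` be the supremum in the statement. Since `R v = 0` and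
`A v = λ₁ v`, the kernel of `x ↦ R A x` contains that of `R`, so `R A` factors through `R`
and `N` is finite. Projecting `y` onto `v^⊥` changes neither `R y` nor `R A y`, hence
`q (A y) ≤ N q y` for every `y`.

For a complex eigenvector `u` with eigenvalue `μ`, the real vectors `Re (c u)`, `c ∈ ℂ`,
satisfy `A Re (c u) = Re (μ c u)`, so `g c = q (Re (c u))` is a seminorm on `ℂ ≅ ℝ²` with
`g (μ c) ≤ N g c`. It vanishes identically only if `u ∈ ℂ v`, which forces `μ = λ₁`.
Otherwise comparing the operator norms of `g` and `c ↦ g (μ c)` gives `|μ| ≤ N`.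
-/
open Matrix

noncomputable def pnorm (p : ENNReal) [Fact (1 ≤ p)] {n : ℕ} (x : Fin n → ℝ) : ℝ :=
  ‖(WithLp.equiv p (Fin n → ℝ)).symm x‖

section Normed

variable {V E F : Type*} [AddCommGroup V] [Module ℝ V]
  [NormedAddCommGroup E] [NormedSpace ℝ E] [NormedAddCommGroup F] [NormedSpace ℝ F]

theorem LinearMap.exists_norm_le_mul_norm_of_ker_le [FiniteDimensional ℝ E]
    (f : V →ₗ[ℝ] E) (g : V →ₗ[ℝ] F) (hfg : LinearMap.ker f ≤ LinearMap.ker g) :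
    ∃ C, ∀ x, ‖g x‖ ≤ C * ‖f x‖ := by
  -- `g` descends to `V ⧸ ker f ≃ range f`; extend it from `range f` to all of `E`.
  obtain ⟨h, hh⟩ := LinearMap.exists_extend
    ((LinearMap.ker f).liftQ g hfg ∘ₗ f.quotKerEquivRange.symm.toLinearMap)
  have hgf : ∀ x, g x = h (f x) := fun x => by
    have := congr($hh ⟨f x, LinearMap.mem_range_self f x⟩)
    simp only [LinearMap.coe_comp, Function.comp_apply, Submodule.coe_subtype, LinearEquiv.coe_coe,
      LinearMap.quotKerEquivRange_symm_apply_image] at this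
    exact this.symm
  exact ⟨‖LinearMap.toContinuousLinearMap h‖, fun x => by
    rw [hgf]; exact (LinearMap.toContinuousLinearMap h).le_opNorm (f x)⟩

theorem norm_le_sSup_mul_norm (f : V →ₗ[ℝ] E) (g : V →ₗ[ℝ] F) (W : Submodule ℝ V) {C : ℝ}
    (hC : ∀ x, ‖g x‖ ≤ C * ‖f x‖) {x : V} (hx : x ∈ W) :
    ‖g x‖ ≤ sSup {r | ∃ y, ‖f y‖ ≤ 1 ∧ y ∈ W ∧ r = ‖g y‖} * ‖f x‖ := by
  rcases (norm_nonneg (f x)).eq_or_lt with hfx | hfx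
  · simpa [← hfx] using hC x
  have hbdd : BddAbove {r | ∃ y, ‖f y‖ ≤ 1 ∧ y ∈ W ∧ r = ‖g y‖} := ⟨max C 0, by
    rintro r ⟨y, hy, -, rfl⟩
    calc ‖g y‖ ≤ C * ‖f y‖ := hC y
      _ ≤ max C 0 * ‖f y‖ := by gcongr; exact le_max_left C 0
      _ ≤ max C 0 := mul_le_of_le_one_right (le_max_right C 0) hy⟩
  rw [← div_le_iff₀ hfx]
  refine le_csSup hbdd ⟨‖f x‖⁻¹ • x, ?_, W.smul_mem _ hx, ?_⟩
  · simp [norm_smul, hfx.ne']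
  · simp [norm_smul, div_eq_inv_mul]

theorem Complex.norm_le_of_norm_map_mul_le (L : ℂ →ₗ[ℝ] E) (hL : L ≠ 0) {μ : ℂ} {N : ℝ}
    (h : ∀ c, ‖L (μ * c)‖ ≤ N * ‖L c‖) : ‖μ‖ ≤ N := by
  obtain ⟨c₀, hc₀⟩ : ∃ c, L c ≠ 0 := by
    by_contra! h0
    exact hL (LinearMap.ext h0)
  have hN : 0 ≤ N :=
    nonneg_of_mul_nonneg_left ((norm_nonneg _).trans (h c₀)) (norm_pos_iff.mpr hc₀)
  rcases eq_or_ne μ 0 with rfl | hμ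
  · simpa using hN
  set L' := LinearMap.toContinuousLinearMap L
  have hL' : 0 < ‖L'‖ := norm_pos_iff.mpr fun h0 => hc₀ (DFunLike.congr_fun h0 c₀)
  have hbound : ∀ c, ‖L' c‖ ≤ N * ‖μ‖⁻¹ * ‖L'‖ * ‖c‖ := fun c =>
    calc ‖L' c‖ = ‖L (μ * (μ⁻¹ * c))‖ := by rw [mul_inv_cancel_left₀ hμ]; rfl
      _ ≤ N * ‖L' (μ⁻¹ * c)‖ := h _
      _ ≤ N * (‖L'‖ * ‖μ⁻¹ * c‖) := by gcongr; exact L'.le_opNorm _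
      _ = N * ‖μ‖⁻¹ * ‖L'‖ * ‖c‖ := by rw [norm_mul, norm_inv]; ring
  have h1 : 1 * ‖L'‖ ≤ N * ‖μ‖⁻¹ * ‖L'‖ := by
    simpa using L'.opNorm_le_bound (by positivity) hbound
  rwa [mul_le_mul_iff_left₀ hL', le_mul_inv_iff₀ (norm_pos_iff.mpr hμ), one_mul] at h1

end Normed

section RealMatrix

variable {ι E : Type*} [NormedAddCommGroup E] [NormedSpace ℝ E]

noncomputable def reSMul (u : ι → ℂ) : ℂ →ₗ[ℝ] ι → ℝ where
  toFun c i := (c * u i).re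
  map_add' c d := by ext i; simp [add_mul]
  map_smul' r c := by ext i; simp [mul_assoc]

@[simp] theorem reSMul_apply (u : ι → ℂ) (c : ℂ) (i : ι) : reSMul u c i = (c * u i).re := rfl

theorem Matrix.mulVec_reSMul [Fintype ι] {A : Matrix ι ι ℝ} {u : ι → ℂ} {μ : ℂ}
    (hu : A.map Complex.ofReal *ᵥ u = μ • u) (c : ℂ) :
    A *ᵥ reSMul u c = reSMul u (μ * c) := by
  ext i
  calc (A *ᵥ reSMul u c) i = (c * (A.map Complex.ofReal *ᵥ u) i).re := by
        simp only [mulVec, dotProduct, map_apply, Finset.mul_sum, Complex.re_sum, reSMul_apply,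
          mul_left_comm c, Complex.re_ofReal_mul]
    _ = (μ * c * u i).re := by rw [hu, Pi.smul_apply, smul_eq_mul, mul_left_comm, mul_assoc]

theorem Matrix.eq_of_forall_reSMul_eq_smul [Fintype ι] {A : Matrix ι ι ℝ} {u : ι → ℂ}
    {μ lam : ℂ} {v : ι → ℝ} (hu0 : u ≠ 0) (hu : A.map Complex.ofReal *ᵥ u = μ • u)
    (hv : A.map Complex.ofReal *ᵥ (fun i => (v i : ℂ)) = lam • fun i => (v i : ℂ))
    (h : ∀ c, ∃ t : ℝ, reSMul u c = t • v) : μ = lam := by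
  obtain ⟨s, hs⟩ := h 1
  obtain ⟨t, ht⟩ := h (-Complex.I)
  have hu' : u = (s + t * Complex.I) • fun i => (v i : ℂ) := by
    ext i
    have hre : (u i).re = s * v i := by simpa using congr_fun hs i
    have him : (u i).im = t * v i := by simpa using congr_fun ht i
    apply Complex.ext <;> simp [hre, him]
  have : μ • u = lam • u := by
    rw [← hu, hu', mulVec_smul, hv, smul_comm]
  exact smul_left_injective ℂ hu0 this

theorem Matrix.norm_le_of_map_mulVec_eq_smul [Fintype ι] (A : Matrix ι ι ℝ)
    (L : (ι → ℝ) →ₗ[ℝ] E) {N : ℝ} (hA : ∀ y, ‖L (A *ᵥ y)‖ ≤ N * ‖L y‖) {u : ι → ℂ} {μ : ℂ}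
    (hu : A.map Complex.ofReal *ᵥ u = μ • u) (hLu : L ∘ₗ reSMul u ≠ 0) : ‖μ‖ ≤ N :=
  Complex.norm_le_of_norm_map_mul_le _ hLu fun c => by
    simpa only [LinearMap.comp_apply, mulVec_reSMul hu] using hA (reSMul u c)

theorem Matrix.norm_le_of_mem_spectrum [Fintype ι] [DecidableEq ι] (A : Matrix ι ι ℝ)
    (L : (ι → ℝ) →ₗ[ℝ] E) {N : ℝ} (hA : ∀ y, ‖L (A *ᵥ y)‖ ≤ N * ‖L y‖) {v : ι → ℝ} {lam : ℝ}
    (hv : A *ᵥ v = lam • v) (hker : ∀ x, L x = 0 ↔ ∃ t : ℝ, x = t • v) {μ : ℂ}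
    (hμ : μ ∈ spectrum ℂ (A.map Complex.ofReal)) (hne : μ ≠ lam) : ‖μ‖ ≤ N := by
  rw [← spectrum_toLin', ← Module.End.hasEigenvalue_iff_mem_spectrum] at hμ
  obtain ⟨u, hu⟩ := hμ.exists_hasEigenvector
  have hAu : A.map Complex.ofReal *ᵥ u = μ • u := by simpa using hu.apply_eq_smul
  refine A.norm_le_of_map_mulVec_eq_smul L hA hAu fun h0 => hne ?_
  refine eq_of_forall_reSMul_eq_smul hu.2 hAu ?_ fun c => (hker _).mp (LinearMap.congr_fun h0 c)
  ext i
  refine (Complex.ofRealHom.map_mulVec A v i).symm.trans ?_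
  simp [hv]

theorem dotProduct_sub_div_smul_self [Fintype ι] (v y : ι → ℝ) :
    v ⬝ᵥ (y - (v ⬝ᵥ y / v ⬝ᵥ v) • v) = 0 := by
  rcases eq_or_ne v 0 with rfl | hv
  · simp
  have : v ⬝ᵥ v ≠ 0 := fun h => hv (dotProduct_self_eq_zero.mp h)
  rw [dotProduct_sub, dotProduct_smul, smul_eq_mul, div_mul_cancel₀ _ this, sub_self]

theorem Matrix.norm_mulVec_le_sSup_mul_norm [Fintype ι] [FiniteDimensional ℝ E]
    (A : Matrix ι ι ℝ) (L : (ι → ℝ) →ₗ[ℝ] E) {v : ι → ℝ} (hLv : L v = 0)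
    (hker : LinearMap.ker L ≤ LinearMap.ker (L ∘ₗ A.mulVecLin)) (y : ι → ℝ) :
    ‖L (A *ᵥ y)‖ ≤ sSup {r | ∃ x, ‖L x‖ ≤ 1 ∧ v ⬝ᵥ x = 0 ∧ r = ‖L (A *ᵥ x)‖} * ‖L y‖ := by
  obtain ⟨C, hC⟩ := L.exists_norm_le_mul_norm_of_ker_le _ hker
  have hLAv : L (A *ᵥ v) = 0 := hker hLv
  have := norm_le_sSup_mul_norm L _ (LinearMap.ker (dotProductBilin ℝ ℝ v)) hC
    (dotProduct_sub_div_smul_self v y)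
  simpa [mulVec_sub, mulVec_smul, hLv, hLAv] using this

end RealMatrix

theorem stmt13_general {n k : ℕ} (p : ENNReal) [Fact (1 ≤ p)]
    (A : Matrix (Fin n) (Fin n) ℝ) (lam1 : ℝ) (v : Fin n → ℝ)
    (heig : A.mulVec v = lam1 • v)
    (R : Matrix (Fin k) (Fin n) ℝ)
    (hker : ∀ x : Fin n → ℝ, R.mulVec x = 0 ↔ ∃ t : ℝ, x = t • v) :
    sSup {r : ℝ | ∃ μ : ℂ, μ ∈ spectrum ℂ (A.map Complex.ofReal) ∧ μ ≠ (lam1 : ℂ) ∧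
        r = ‖μ‖}
      ≤ sSup {r : ℝ | ∃ x : Fin n → ℝ, pnorm p (R.mulVec x) ≤ 1 ∧ v ⬝ᵥ x = 0 ∧
          r = pnorm p (R.mulVec (A.mulVec x))} := by
  let L := (WithLp.linearEquiv p ℝ (Fin k → ℝ)).symm.toLinearMap ∘ₗ R.mulVecLin
  have hkerL : ∀ x, L x = 0 ↔ ∃ t : ℝ, x = t • v := fun x => by
    simpa [L] using hker x
  have hLv : L v = 0 := (hkerL v).mpr ⟨1, (one_smul ℝ v).symm⟩
  have hLA : LinearMap.ker L ≤ LinearMap.ker (L ∘ₗ A.mulVecLin) := fun x hx => by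
    obtain ⟨t, rfl⟩ := (hkerL x).mp hx
    simp [heig, hLv]
  change _ ≤ sSup {r | ∃ x, ‖L x‖ ≤ 1 ∧ v ⬝ᵥ x = 0 ∧ r = ‖L (A *ᵥ x)‖}
  refine Real.sSup_le ?_ (Real.sSup_nonneg ?_)
  · rintro _ ⟨μ, hμ, hne, rfl⟩
    exact A.norm_le_of_mem_spectrum L (A.norm_mulVec_le_sSup_mul_norm L hLv hLA) heig hkerL hμ hne
  · rintro _ ⟨x, -, -, rfl⟩
    exact norm_nonneg _

/-- If `A` has a real eigenvalue `λ₁` of strictly largest modulus with right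
eigenvector `v`, and `ker R = span(v)`, then for any `p ∈ [1,∞]` the `R`-weighted induced
seminorm `⟦A⟧_{p,R}` dominates the essential spectral radius
`ρ_ess(A) = max {|μ| : μ ∈ spec(A), μ ≠ λ₁}`. -/
theorem stmt13 {n k : ℕ} (p : ENNReal) [Fact (1 ≤ p)]
    (A : Matrix (Fin n) (Fin n) ℝ) (lam1 : ℝ) (v : Fin n → ℝ) (hv : v ≠ 0)
    (heig : A.mulVec v = lam1 • v)
    (hdom : ∀ μ ∈ spectrum ℂ (A.map Complex.ofReal), μ ≠ (lam1 : ℂ) →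
      ‖μ‖ < |lam1|)
    (R : Matrix (Fin k) (Fin n) ℝ)
    (hker : ∀ x : Fin n → ℝ, R.mulVec x = 0 ↔ ∃ t : ℝ, x = t • v) :
    sSup {r : ℝ | ∃ μ : ℂ, μ ∈ spectrum ℂ (A.map Complex.ofReal) ∧ μ ≠ (lam1 : ℂ) ∧
        r = ‖μ‖}
      ≤ sSup {r : ℝ | ∃ x : Fin n → ℝ, pnorm p (R.mulVec x) ≤ 1 ∧ v ⬝ᵥ x = 0 ∧
          r = pnorm p (R.mulVec (A.mulVec x))} :=
  stmt13_general p A lam1 v heig R hker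
end

section
/- Let A ∈ ℝ^{n×n} have a real eigenvalue of largest absolute value with right eigenvector v, and let P = Pᵀ ⪰ 0 with ker P = span(v). Then the squared P^{1/2}-weighted induced ℓ₂ seminorm of A equals the minimum b such that Aᵀ P A ⪯ b P; i.e., sup_{x ∉ ker P} (xᵀAᵀPAx)/(xᵀPx) = min { b : Aᵀ P A ⪯ b P }. -/
/-!
A weight `b` satisfies `AᵀPA ⪯ bP` iff `xᵀAᵀPAx ≤ b xᵀPx` for every `x`. Since `A v = λ v`,
the kernel `span v` of `P` lies in the kernel of `AᵀPA`, so both sides vanish on it and the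
condition only has to be checked where `xᵀPx > 0`, where it says that `b` bounds the Rayleigh
quotient. Hence the feasible `b` are exactly the upper bounds of the quotients, and the least
upper bound is the least feasible `b`.
-/

open Matrix

/-- No boundedness hypothesis is needed: if `s` is empty or unbounded, both sides are the junk
value `0`. -/
theorem Real.sSup_eq_sInf_upperBounds (s : Set ℝ) : sSup s = sInf (upperBounds s) := by
  rcases s.eq_empty_or_nonempty with rfl | hne
  · rw [Real.sSup_empty, upperBounds_empty, Real.sInf_of_not_bddBelow not_bddBelow_univ]
  by_cases hbdd : BddAbove s
  · exact (csInf_upperBounds_eq_csSup hbdd hne).symm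
  · rw [Real.sSup_of_not_bddAbove hbdd, Set.not_nonempty_iff_eq_empty.mp hbdd, Real.sInf_empty]

namespace Matrix

variable {ι : Type*} [Fintype ι]

theorem PosSemidef.dotProduct_mulVec_pos {P : Matrix ι ι ℝ} (hP : P.PosSemidef) {x : ι → ℝ}
    (hx : P *ᵥ x ≠ 0) : 0 < x ⬝ᵥ P *ᵥ x := by
  have hnonneg : 0 ≤ x ⬝ᵥ P *ᵥ x := hP.dotProduct_mulVec_nonneg x
  have hne : x ⬝ᵥ P *ᵥ x ≠ 0 := fun h => hx ((hP.dotProduct_mulVec_zero_iff x).mp h)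
  exact lt_of_le_of_ne hnonneg hne.symm

theorem posSemidef_smul_sub_iff {P Q : Matrix ι ι ℝ} (hP : P.IsHermitian) (hQ : Q.IsHermitian)
    (b : ℝ) : (b • P - Q).PosSemidef ↔ ∀ x, x ⬝ᵥ Q *ᵥ x ≤ b * (x ⬝ᵥ P *ᵥ x) := by
  have hquad : ∀ x : ι → ℝ, x ⬝ᵥ (b • P - Q) *ᵥ x = b * (x ⬝ᵥ P *ᵥ x) - x ⬝ᵥ Q *ᵥ x := by
    intro x
    rw [sub_mulVec, dotProduct_sub, smul_mulVec, dotProduct_smul, smul_eq_mul]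
  rw [posSemidef_iff_dotProduct_mulVec]
  simp only [star_trivial, hquad, sub_nonneg]
  exact and_iff_right ((hP.smul (IsSelfAdjoint.all b)).sub hQ)

theorem setOf_posSemidef_smul_sub_eq_upperBounds {P Q : Matrix ι ι ℝ} (hP : P.PosSemidef)
    (hQ : Q.IsHermitian) (hker : ∀ x, P *ᵥ x = 0 → Q *ᵥ x = 0) :
    {b : ℝ | (b • P - Q).PosSemidef} =
      upperBounds {r | ∃ x, P *ᵥ x ≠ 0 ∧ r = x ⬝ᵥ Q *ᵥ x / x ⬝ᵥ P *ᵥ x} := by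
  ext b
  simp only [Set.mem_ofPred_eq, posSemidef_smul_sub_iff hP.isHermitian hQ, mem_upperBounds,
    forall_exists_index, and_imp]
  constructor
  · rintro hb _ x hx rfl
    rw [div_le_iff₀ (hP.dotProduct_mulVec_pos hx)]
    linarith [hb x]
  · intro hb x
    by_cases hx : P *ᵥ x = 0
    · simp [hx, hker x hx]
    · have := hb _ x hx rfl
      rw [div_le_iff₀ (hP.dotProduct_mulVec_pos hx)] at this
      linarith

end Matrix

theorem stmt14_general {n : ℕ} (A : Matrix (Fin n) (Fin n) ℝ)
    (lam : ℝ) (v : Fin n → ℝ) (heig : A.mulVec v = lam • v)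
    (P : Matrix (Fin n) (Fin n) ℝ) (hP : P.PosSemidef)
    (hker : ∀ x : Fin n → ℝ, P.mulVec x = 0 ↔ ∃ t : ℝ, x = t • v) :
    sSup {r : ℝ | ∃ x : Fin n → ℝ, P.mulVec x ≠ 0 ∧
        r = (x ⬝ᵥ (Aᵀ * P * A).mulVec x) / (x ⬝ᵥ P.mulVec x)}
      = sInf {b : ℝ | (b • P - Aᵀ * P * A).PosSemidef} := by
  have hkerQ : ∀ x, P *ᵥ x = 0 → (Aᵀ * P * A) *ᵥ x = 0 := by
    intro x hx
    obtain ⟨t, rfl⟩ := (hker x).mp hx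
    have hAx : P *ᵥ (A *ᵥ (t • v)) = 0 :=
      (hker _).mpr ⟨t * lam, by rw [mulVec_smul, heig, smul_smul]⟩
    rw [← mulVec_mulVec, ← mulVec_mulVec, hAx, mulVec_zero]
  have hQ : (Aᵀ * P * A).IsHermitian := by
    simpa using (hP.conjTranspose_mul_mul_same A).isHermitian
  rw [setOf_posSemidef_smul_sub_eq_upperBounds hP hQ hkerQ]
  exact Real.sSup_eq_sInf_upperBounds _

/-- If `A` has a real eigenvalue `lam` of largest modulus with right
eigenvector `v`, and `P = Pᵀ ⪰ 0` with `ker P = span(v)`, then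
`sup_{x ∉ ker P} (xᵀAᵀPAx)/(xᵀPx) = min {b : AᵀPA ⪯ bP}`. -/
theorem stmt14 {n : ℕ} (A : Matrix (Fin n) (Fin n) ℝ)
    (lam : ℝ) (v : Fin n → ℝ) (hv : v ≠ 0) (heig : A.mulVec v = lam • v)
    (hdom : ∀ μ ∈ spectrum ℂ (A.map Complex.ofReal), ‖μ‖ ≤ |lam|)
    (P : Matrix (Fin n) (Fin n) ℝ) (hP : P.PosSemidef)
    (hker : ∀ x : Fin n → ℝ, P.mulVec x = 0 ↔ ∃ t : ℝ, x = t • v) :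
    sSup {r : ℝ | ∃ x : Fin n → ℝ, P.mulVec x ≠ 0 ∧
        r = (x ⬝ᵥ (Aᵀ * P * A).mulVec x) / (x ⬝ᵥ P.mulVec x)}
      = sInf {b : ℝ | (b • P - Aᵀ * P * A).PosSemidef} :=
  stmt14_general A lam v heig P hP hker
end

section
/- For a row stochastic matrix A ∈ ℝ^{n×n}, the C_nᵀ-weighted induced ℓ_∞ seminorm of A, i.e., sup { max_{i,j} |(Ax)_i − (Ax)_j| : max_{i,j} |x_i − x_j| ≤ 1 }, equals (1/2) max_{i,j} ∑ₖ |A_{ik} − A_{jk}|. -/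
/-!
Since the rows of `A` have equal sums, `(A x)_i - (A x)_j = ∑ₖ (A_{ik} - A_{jk}) (x_k - c)` for
every constant `c`; centring `c` at the midpoint of the range of `x` gives
`|x_k - c| ≤ ½ max |x_a - x_b|`, whence the upper bound. It is attained by the vector
`x_k = ½ sign (A_{ik} - A_{jk})` for a pair `(i, j)` maximizing `∑ₖ |A_{ik} - A_{jk}|`.
-/

open Matrix

variable {ι : Type*}

/-- The seminorm `‖C_nᵀ x‖_∞`. -/
noncomputable def spread (x : ι → ℝ) : ℝ := ⨆ i, ⨆ j, |x i - x j|

lemma spread_nonneg (x : ι → ℝ) : 0 ≤ spread x :=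
  Real.iSup_nonneg fun _ ↦ Real.iSup_nonneg fun _ ↦ abs_nonneg _

lemma iSup_iSup_le_of_forall_le {f : ι → ι → ℝ} {a : ℝ} (h : ∀ i j, f i j ≤ a) (ha : 0 ≤ a) :
    ⨆ i, ⨆ j, f i j ≤ a :=
  Real.iSup_le (fun i ↦ Real.iSup_le (h i) ha) ha

lemma le_iSup_iSup_of_finite [Finite ι] (f : ι → ι → ℝ) (i j : ι) : f i j ≤ ⨆ i, ⨆ j, f i j :=
  le_ciSup_of_le (Set.finite_range _).bddAbove i (le_ciSup (Set.finite_range _).bddAbove j)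

lemma exists_forall_abs_sub_le_half [Finite ι] {x : ι → ℝ} {d : ℝ} (h : ∀ i j, |x i - x j| ≤ d) :
    ∃ c, ∀ k, |x k - c| ≤ d / 2 := by
  cases isEmpty_or_nonempty ι
  · exact ⟨0, isEmptyElim⟩
  obtain ⟨imax, himax⟩ := Finite.exists_max x
  obtain ⟨imin, himin⟩ := Finite.exists_min x
  have hrange := (abs_le.mp (h imax imin)).2
  refine ⟨(x imax + x imin) / 2, fun k ↦ abs_le.mpr ⟨?_, ?_⟩⟩
  · linarith [himin k]
  · linarith [himax k]

variable [Fintype ι]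

noncomputable def rowDist (A : Matrix ι ι ℝ) : ℝ := ⨆ i, ⨆ j, ∑ k, |A i k - A j k|

lemma rowDist_nonneg (A : Matrix ι ι ℝ) : 0 ≤ rowDist A :=
  Real.iSup_nonneg fun _ ↦ Real.iSup_nonneg fun _ ↦ Finset.sum_nonneg fun _ _ ↦ abs_nonneg _

lemma Matrix.mulVec_sub_mulVec_eq_sum_mul_sub (A : Matrix ι ι ℝ) {i j : ι}
    (hij : ∑ k, A i k = ∑ k, A j k) (x : ι → ℝ) (c : ℝ) :
    (A *ᵥ x) i - (A *ᵥ x) j = ∑ k, (A i k - A j k) * (x k - c) := by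
  simp only [mul_sub, sub_mul, Finset.sum_sub_distrib, ← Finset.sum_mul, hij, sub_self, sub_zero]
  rfl

lemma Matrix.abs_mulVec_sub_mulVec_le (A : Matrix ι ι ℝ) {i j : ι}
    (hij : ∑ k, A i k = ∑ k, A j k) {x : ι → ℝ} {c r : ℝ} (hx : ∀ k, |x k - c| ≤ r) :
    |(A *ᵥ x) i - (A *ᵥ x) j| ≤ r * ∑ k, |A i k - A j k| := by
  rw [A.mulVec_sub_mulVec_eq_sum_mul_sub hij x c, Finset.mul_sum]
  refine (Finset.abs_sum_le_sum_abs _ _).trans (Finset.sum_le_sum fun k _ ↦ ?_)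
  rw [abs_mul, mul_comm]
  exact mul_le_mul_of_nonneg_right (hx k) (abs_nonneg _)

theorem Matrix.spread_mulVec_le (A : Matrix ι ι ℝ) (hA : ∀ i j, ∑ k, A i k = ∑ k, A j k)
    (x : ι → ℝ) : spread (A *ᵥ x) ≤ spread x / 2 * rowDist A := by
  obtain ⟨c, hc⟩ := exists_forall_abs_sub_le_half (le_iSup_iSup_of_finite fun i j ↦ |x i - x j|)
  have hnonneg : 0 ≤ spread x / 2 := by linarith [spread_nonneg x]
  refine iSup_iSup_le_of_forall_le (fun i j ↦ ?_) (mul_nonneg hnonneg (rowDist_nonneg A))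
  exact (A.abs_mulVec_sub_mulVec_le (hA i j) hc).trans <|
    mul_le_mul_of_nonneg_left (le_iSup_iSup_of_finite (fun i j ↦ ∑ k, |A i k - A j k|) i j) hnonneg

lemma Matrix.exists_spread_le_one_mulVec_sub_mulVec_eq (A : Matrix ι ι ℝ) (i j : ι) :
    ∃ x : ι → ℝ, spread x ≤ 1 ∧ (A *ᵥ x) i - (A *ᵥ x) j = 1 / 2 * ∑ k, |A i k - A j k| := by
  set x : ι → ℝ := fun k ↦ 1 / 2 * SignType.sign (A i k - A j k)
  have hx : ∀ k, |x k| ≤ 1 / 2 := fun k ↦ by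
    simp only [x, abs_mul]
    rcases SignType.sign (A i k - A j k) with _ | _ | _ <;> norm_num
  refine ⟨x, iSup_iSup_le_of_forall_le (fun a b ↦ ?_) zero_le_one, ?_⟩
  · linarith [abs_sub (x a) (x b), hx a, hx b]
  · simp only [mulVec, dotProduct, ← Finset.sum_sub_distrib, ← sub_mul, Finset.mul_sum, x,
      ← self_mul_sign]
    exact Finset.sum_congr rfl fun k _ ↦ by ring

theorem Matrix.isGreatest_spread_mulVec (A : Matrix ι ι ℝ)
    (hA : ∀ i j, ∑ k, A i k = ∑ k, A j k) :
    IsGreatest {r | ∃ x, spread x ≤ 1 ∧ r = spread (A *ᵥ x)} (1 / 2 * rowDist A) := by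
  have hbound : ∀ x, spread x ≤ 1 → spread (A *ᵥ x) ≤ 1 / 2 * rowDist A := fun x hx ↦
    (A.spread_mulVec_le hA x).trans (mul_le_mul_of_nonneg_right (by linarith) (rowDist_nonneg A))
  refine ⟨?_, fun r ⟨x, hx, hr⟩ ↦ hr ▸ hbound x hx⟩
  cases isEmpty_or_nonempty ι
  · exact ⟨0, by simp [spread], by simp [spread, rowDist]⟩
  obtain ⟨i, hi⟩ := exists_eq_ciSup_of_finite (f := fun i ↦ ⨆ j, ∑ k, |A i k - A j k|)
  obtain ⟨j, hj⟩ := exists_eq_ciSup_of_finite (f := fun j ↦ ∑ k, |A i k - A j k|)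
  obtain ⟨x, hx, hxij⟩ := A.exists_spread_le_one_mulVec_sub_mulVec_eq i j
  refine ⟨x, hx, le_antisymm ?_ ?_⟩
  · rw [rowDist, ← hi, ← hj, ← hxij]
    exact (le_abs_self _).trans (le_iSup_iSup_of_finite (fun i j ↦ |(A *ᵥ x) i - (A *ᵥ x) j|) i j)
  · exact hbound x hx

theorem stmt16_general {n : ℕ} (A : Matrix (Fin n) (Fin n) ℝ)
    (hA1 : ∀ i, ∑ j, A i j = 1) :
    sSup {r : ℝ | ∃ x : Fin n → ℝ,
        (⨆ i : Fin n, ⨆ j : Fin n, |x i - x j|) ≤ 1 ∧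
        r = ⨆ i : Fin n, ⨆ j : Fin n, |A.mulVec x i - A.mulVec x j|}
      = (1 / 2) * ⨆ i : Fin n, ⨆ j : Fin n, ∑ k, |A i k - A j k| :=
  (A.isGreatest_spread_mulVec fun i j ↦ by rw [hA1 i, hA1 j]).csSup_eq

/-- For a row stochastic `A`, the `C_nᵀ`-weighted induced ℓ_∞ seminorm
`sup {max_{i,j} |(Ax)_i − (Ax)_j| : max_{i,j} |x_i − x_j| ≤ 1}` equals
`(1/2) max_{i,j} ∑ₖ |A_{ik} − A_{jk}|`. -/
theorem stmt16 {n : ℕ} (A : Matrix (Fin n) (Fin n) ℝ)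
    (hA0 : ∀ i j, 0 ≤ A i j) (hA1 : ∀ i, ∑ j, A i j = 1) :
    sSup {r : ℝ | ∃ x : Fin n → ℝ,
        (⨆ i : Fin n, ⨆ j : Fin n, |x i - x j|) ≤ 1 ∧
        r = ⨆ i : Fin n, ⨆ j : Fin n, |A.mulVec x i - A.mulVec x j|}
      = (1 / 2) * ⨆ i : Fin n, ⨆ j : Fin n, ∑ k, |A i k - A j k| :=
  stmt16_general A hA1
end

section
/- For a row stochastic matrix A ∈ ℝ^{n×n} and any vector x ∈ ℝⁿ, max_{i,j} |(Ax)_i − (Ax)_j| ≤ (1 − min_{i,j} ∑ₖ min(A_{ik}, A_{jk})) · max_{i,j} |x_i − x_j|. -/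
/-!
Let `s k = min (A i k) (A j k)` be the mass shared by rows `i` and `j`. Removing it from both rows
leaves `(A *ᵥ x) i - (A *ᵥ x) j` unchanged and turns the two rows into nonnegative weight vectors of
the same total `1 - ∑ k, s k`. A weighted sum with total `c` lies between `c * min x` and
`c * max x`, so the difference is at most `(1 - ∑ k, s k)` times the oscillation of `x`.
-/

open Matrix

theorem abs_sub_le_iSup_iSup_abs_sub {ι : Type*} [Finite ι] (x : ι → ℝ) (i j : ι) :
    |x i - x j| ≤ ⨆ i, ⨆ j, |x i - x j| :=
  (le_ciSup (Finite.bddAbove_range _) j).trans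
    (le_ciSup (Finite.bddAbove_range (fun i => ⨆ j, |x i - x j|)) i)

theorem iSup_iSup_abs_sub_le {ι : Type*} [Nonempty ι] {x : ι → ℝ} {C : ℝ}
    (h : ∀ i j, x i - x j ≤ C) :
    ⨆ i, ⨆ j, |x i - x j| ≤ C :=
  ciSup_le fun i => ciSup_le fun j => abs_sub_le_iff.2 ⟨h i j, h j i⟩

theorem sum_mul_sub_sum_mul_le {ι : Type*} [Fintype ι] {w w' x : ι → ℝ} {M : ℝ}
    (hw : ∀ k, 0 ≤ w k) (hw' : ∀ k, 0 ≤ w' k) (hsum : ∑ k, w' k = ∑ k, w k)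
    (hx : ∀ k l, x k - x l ≤ M) :
    ∑ k, w k * x k - ∑ k, w' k * x k ≤ (∑ k, w k) * M := by
  cases isEmpty_or_nonempty ι
  · simp
  obtain ⟨u, -, hu⟩ := Finset.univ.exists_max_image x Finset.univ_nonempty
  obtain ⟨v, -, hv⟩ := Finset.univ.exists_min_image x Finset.univ_nonempty
  have hle : ∑ k, w k * x k ≤ (∑ k, w k) * x u := by
    rw [Finset.sum_mul]
    exact Finset.sum_le_sum fun k _ => mul_le_mul_of_nonneg_left (hu k (Finset.mem_univ k)) (hw k)
  have hge : (∑ k, w k) * x v ≤ ∑ k, w' k * x k := by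
    rw [← hsum, Finset.sum_mul]
    exact Finset.sum_le_sum fun k _ => mul_le_mul_of_nonneg_left (hv k (Finset.mem_univ k)) (hw' k)
  have hc : 0 ≤ ∑ k, w k := Finset.sum_nonneg fun k _ => hw k
  have hspread : (∑ k, w k) * (x u - x v) ≤ (∑ k, w k) * M :=
    mul_le_mul_of_nonneg_left (hx u v) hc
  linarith

theorem mulVec_sub_mulVec_le {m ι : Type*} [Fintype ι] {A : Matrix m ι ℝ}
    (hA1 : ∀ i, ∑ k, A i k = 1) {x : ι → ℝ} {M : ℝ} (hx : ∀ k l, x k - x l ≤ M) (i j : m) :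
    (A *ᵥ x) i - (A *ᵥ x) j ≤ (1 - ∑ k, min (A i k) (A j k)) * M := by
  set s := fun k => min (A i k) (A j k)
  have hshared : (A *ᵥ x) i - (A *ᵥ x) j
      = ∑ k, (A i k - s k) * x k - ∑ k, (A j k - s k) * x k := by
    simp only [mulVec, dotProduct, sub_mul, Finset.sum_sub_distrib]
    ring
  have hmass : ∀ i', ∑ k, (A i' k - s k) = 1 - ∑ k, s k := fun i' => by
    rw [Finset.sum_sub_distrib, hA1]
  rw [hshared, ← hmass i]
  exact sum_mul_sub_sum_mul_le (fun k => sub_nonneg.2 (min_le_left _ _))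
    (fun k => sub_nonneg.2 (min_le_right _ _)) (by rw [hmass, hmass]) hx

theorem stmt17_general {n : ℕ} (A : Matrix (Fin n) (Fin n) ℝ)
    (hA1 : ∀ i, ∑ j, A i j = 1) (x : Fin n → ℝ) :
    (⨆ i : Fin n, ⨆ j : Fin n, |A.mulVec x i - A.mulVec x j|)
      ≤ (1 - ⨅ i : Fin n, ⨅ j : Fin n, ∑ k, min (A i k) (A j k))
        * ⨆ i : Fin n, ⨆ j : Fin n, |x i - x j| := by
  cases isEmpty_or_nonempty (Fin n)
  · simp [Real.iSup_of_isEmpty]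
  have hx : ∀ k l, x k - x l ≤ ⨆ i, ⨆ j, |x i - x j| := fun k l =>
    (le_abs_self _).trans (abs_sub_le_iSup_iSup_abs_sub x k l)
  refine iSup_iSup_abs_sub_le fun i j => (mulVec_sub_mulVec_le hA1 hx i j).trans ?_
  have hδ : ⨅ i, ⨅ j, ∑ k, min (A i k) (A j k) ≤ ∑ k, min (A i k) (A j k) :=
    (ciInf_le (Finite.bddBelow_range (fun i => ⨅ j, ∑ k, min (A i k) (A j k))) i).trans
      (ciInf_le (Finite.bddBelow_range _) j)
  have hM : 0 ≤ ⨆ i, ⨆ j, |x i - x j| := by simpa using hx i i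
  gcongr

/-- For a row stochastic `A` and any `x`, the oscillation of `Ax` is at most
the Dobrushin coefficient `1 − min_{i,j} ∑ₖ min(A_{ik}, A_{jk})` times the oscillation of `x`. -/
theorem stmt17 {n : ℕ} (A : Matrix (Fin n) (Fin n) ℝ)
    (hA0 : ∀ i j, 0 ≤ A i j) (hA1 : ∀ i, ∑ j, A i j = 1) (x : Fin n → ℝ) :
    (⨆ i : Fin n, ⨆ j : Fin n, |A.mulVec x i - A.mulVec x j|)
      ≤ (1 - ⨅ i : Fin n, ⨅ j : Fin n, ∑ k, min (A i k) (A j k))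
        * ⨆ i : Fin n, ⨆ j : Fin n, |x i - x j| :=
  stmt17_general A hA1 x
end
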